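/- Let (P, m, 1_P, R) be a Rota-Baxter species of weight λ and let F(P) = ⊕_{n≥0} P[n̲] be its full Fock space with the product x·y = P[σ_{m,n}](m_{m̲,n̲}(x ⊗ y)) and operator P_F(x) = R_{n̲}(x). Let I ⊆ F(P) be the subspace spanned by the elements x − P[α](x) for x ∈ P[n̲], α ∈ S_n, n ≥ 0. Then P_F(I) ⊆ I, so the bosonic Fock space K(P) = F(P)/I = ⊕_{n≥0} Coinv(P[n̲]) inherits a graded Rota-Baxter algebra structure of weight λ, with induced operator P_K sending the class of x ∈ P[n̲] to the class of R_{n̲}(x). -/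
import Mathlib


/-- A Rota-Baxter species of weight `lam` over `k`: a (vector) species `obj` with structure
maps `map σ` for bijections `σ` of finite sets, equivariant associative multiplications
`mul : P[X] ⊗ P[Y] → P[X ⊔ Y]`, a unit `one ∈ P[∅]`, and a morphism of species
`R : P → P` satisfying the Rota-Baxter identity of weight `lam`. -/
structure RBSpecies (k : Type) [Field k] (lam : k) : Type 1 where
  /-- the value of the species on a finite set -/
  obj : (X : Type) → [Fintype X] → ModuleCat.{0} k
  /-- the value of the species on a bijection -/
  map : {X Y : Type} → [Fintype X] → [Fintype Y] → (X ≃ Y) → (obj X →ₗ[k] obj Y)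
  map_id : ∀ (X : Type) [Fintype X], map (Equiv.refl X) = LinearMap.id
  map_comp : ∀ {X Y Z : Type} [Fintype X] [Fintype Y] [Fintype Z] (σ : X ≃ Y) (τ : Y ≃ Z),
    map (σ.trans τ) = (map τ).comp (map σ)
  /-- the multiplication `m_{X,Y}` -/
  mul : {X Y : Type} → [Fintype X] → [Fintype Y] → (obj X →ₗ[k] obj Y →ₗ[k] obj (X ⊕ Y))
  /-- the unit `1 ∈ P[∅]` -/
  one : obj Empty
  mul_natural : ∀ {X X' Y Y' : Type} [Fintype X] [Fintype X'] [Fintype Y] [Fintype Y']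
      (σ : X ≃ X') (τ : Y ≃ Y') (x : obj X) (y : obj Y),
      map (σ.sumCongr τ) (mul x y) = mul (map σ x) (map τ y)
  mul_assoc' : ∀ {X Y Z : Type} [Fintype X] [Fintype Y] [Fintype Z]
      (x : obj X) (y : obj Y) (z : obj Z),
      map (Equiv.sumAssoc X Y Z) (mul (mul x y) z) = mul x (mul y z)
  one_mul' : ∀ {X : Type} [Fintype X] (x : obj X),
      map (Equiv.emptySum Empty X) (mul one x) = x
  mul_one' : ∀ {X : Type} [Fintype X] (x : obj X),
      map (Equiv.sumEmpty X Empty) (mul x one) = x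
  /-- the Rota-Baxter operator -/
  R : {X : Type} → [Fintype X] → (obj X →ₗ[k] obj X)
  R_natural : ∀ {X Y : Type} [Fintype X] [Fintype Y] (σ : X ≃ Y) (x : obj X),
      map σ (R x) = R (map σ x)
  rb : ∀ {X Y : Type} [Fintype X] [Fintype Y] (x : obj X) (y : obj Y),
      mul (R x) (R y) = R (mul (R x) y + mul x (R y) + lam • mul x y)

/-- The product of the full Fock space `F(P) = ⊕ₙ P[n̲]` of a Rota-Baxter species `P`,
on homogeneous components: `x · y = P[σ_{m,n}](m_{m̲,n̲}(x ⊗ y))`, where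
`σ_{m,n} : m̲ ⊔ n̲ ≃ (m+n)̲` is the canonical bijection (`finSumFinEquiv`). -/
noncomputable def RBSpecies.fmul {k : Type} [Field k] {lam : k} (P : RBSpecies k lam)
    {m n : ℕ} (x : P.obj (Fin m)) (y : P.obj (Fin n)) : P.obj (Fin (m + n)) :=
  P.map finSumFinEquiv (P.mul x y)

/-- The unit of the full Fock space, i.e. `1_P ∈ P[∅] = P[0̲]`. -/
noncomputable def RBSpecies.fone {k : Type} [Field k] {lam : k} (P : RBSpecies k lam) :
    P.obj (Fin 0) :=
  P.map (Equiv.equivEmpty (Fin 0)).symm P.one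

/-- The subspace of `P[n̲]` spanned by the elements `x − P[α](x)`, `x ∈ P[n̲]`, `α ∈ S_n`;
its quotient is the space of coinvariants `Coinv(P[n̲])`, the `n`-th graded component of
the bosonic Fock space `K(P)`. -/
noncomputable def coinvRel {k : Type} [Field k] {lam : k} (P : RBSpecies k lam) (n : ℕ) :
    Submodule k (P.obj (Fin n)) :=
  Submodule.span k
    {y | ∃ (x : P.obj (Fin n)) (α : Equiv.Perm (Fin n)), y = x - P.map α x}

/-- The `n`-th graded component `Coinv(P[n̲])` of the bosonic Fock space `K(P)`. -/
noncomputable abbrev Coinv {k : Type} [Field k] {lam : k} (P : RBSpecies k lam) (n : ℕ) :=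
  P.obj (Fin n) ⧸ coinvRel P n

section Aux

variable {k : Type} [Field k] {lam : k} (P : RBSpecies k lam)

lemma RBSpecies.map_trans_apply {X Y Z : Type} [Fintype X] [Fintype Y] [Fintype Z]
    (σ : X ≃ Y) (τ : Y ≃ Z) (x : P.obj X) :
    P.map (σ.trans τ) x = P.map τ (P.map σ x) := by
  rw [P.map_comp]; rfl

lemma RBSpecies.map_refl_apply {X : Type} [Fintype X] (x : P.obj X) :
    P.map (Equiv.refl X) x = x := by
  rw [P.map_id]; rfl

lemma mem_coinvRel_sub (n : ℕ) (x : P.obj (Fin n)) (α : Equiv.Perm (Fin n)) :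
    x - P.map α x ∈ coinvRel P n :=
  Submodule.subset_span ⟨x, α, rfl⟩

lemma mk_map_eq (n : ℕ) (α : Equiv.Perm (Fin n)) (x : P.obj (Fin n)) :
    (Submodule.Quotient.mk (P.map α x) : Coinv P n) = Submodule.Quotient.mk x := by
  rw [Submodule.Quotient.eq]
  simpa [neg_sub] using neg_mem (mem_coinvRel_sub P n x α)

lemma fmul_map_left {m n : ℕ} (α : Equiv.Perm (Fin m)) (x : P.obj (Fin m))
    (y : P.obj (Fin n)) :
    P.fmul (P.map α x) y =
      P.map (finSumFinEquiv.symm.trans ((α.sumCongr (Equiv.refl (Fin n))).trans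
        finSumFinEquiv)) (P.fmul x y) := by
  unfold RBSpecies.fmul
  rw [← P.map_trans_apply, ← Equiv.trans_assoc, Equiv.self_trans_symm, Equiv.refl_trans,
    P.map_trans_apply, P.mul_natural, P.map_refl_apply]

lemma fmul_map_right {m n : ℕ} (α : Equiv.Perm (Fin n)) (x : P.obj (Fin m))
    (y : P.obj (Fin n)) :
    P.fmul x (P.map α y) =
      P.map (finSumFinEquiv.symm.trans (((Equiv.refl (Fin m)).sumCongr α).trans
        finSumFinEquiv)) (P.fmul x y) := by
  unfold RBSpecies.fmul
  rw [← P.map_trans_apply, ← Equiv.trans_assoc, Equiv.self_trans_symm, Equiv.refl_trans,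
    P.map_trans_apply, P.mul_natural, P.map_refl_apply]

lemma mk_fmul_map_left {m n : ℕ} (α : Equiv.Perm (Fin m)) (x : P.obj (Fin m))
    (y : P.obj (Fin n)) :
    (Submodule.Quotient.mk (P.fmul (P.map α x) y) : Coinv P (m + n)) =
      Submodule.Quotient.mk (P.fmul x y) := by
  rw [fmul_map_left]; exact mk_map_eq P _ _ _

lemma mk_fmul_map_right {m n : ℕ} (α : Equiv.Perm (Fin n)) (x : P.obj (Fin m))
    (y : P.obj (Fin n)) :
    (Submodule.Quotient.mk (P.fmul x (P.map α y)) : Coinv P (m + n)) =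
      Submodule.Quotient.mk (P.fmul x y) := by
  rw [fmul_map_right]; exact mk_map_eq P _ _ _

/-- `fmul` as a bilinear map with values in the quotient. -/
noncomputable def fbar (m n : ℕ) :
    P.obj (Fin m) →ₗ[k] P.obj (Fin n) →ₗ[k] Coinv P (m + n) :=
  LinearMap.compr₂ (LinearMap.compr₂ P.mul (P.map finSumFinEquiv)) (coinvRel P (m + n)).mkQ

lemma fbar_apply (m n : ℕ) (x : P.obj (Fin m)) (y : P.obj (Fin n)) :
    fbar P m n x y = Submodule.Quotient.mk (P.fmul x y) := rfl

lemma fbar_ker_right (m n : ℕ) (x : P.obj (Fin m)) :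
    coinvRel P n ≤ LinearMap.ker (fbar P m n x) := by
  rw [coinvRel, Submodule.span_le]
  rintro _ ⟨y, α, rfl⟩
  simp only [SetLike.mem_coe, LinearMap.mem_ker, map_sub, fbar_apply]
  rw [mk_fmul_map_right, sub_self]

/-- first stage of the descended multiplication -/
noncomputable def mulbar1 (m n : ℕ) :
    P.obj (Fin m) →ₗ[k] (Coinv P n →ₗ[k] Coinv P (m + n)) where
  toFun x := (coinvRel P n).liftQ (fbar P m n x) (fbar_ker_right P m n x)
  map_add' a b := by
    refine LinearMap.ext fun u => ?_
    obtain ⟨y, rfl⟩ := Submodule.Quotient.mk_surjective _ u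
    simp [Submodule.liftQ_apply]
  map_smul' c a := by
    refine LinearMap.ext fun u => ?_
    obtain ⟨y, rfl⟩ := Submodule.Quotient.mk_surjective _ u
    simp [Submodule.liftQ_apply]

lemma mulbar1_ker (m n : ℕ) :
    coinvRel P m ≤ LinearMap.ker (mulbar1 P m n) := by
  rw [coinvRel, Submodule.span_le]
  rintro _ ⟨x, α, rfl⟩
  simp only [SetLike.mem_coe, LinearMap.mem_ker, map_sub]
  refine sub_eq_zero.2 (LinearMap.ext fun u => ?_)
  obtain ⟨y, rfl⟩ := Submodule.Quotient.mk_surjective _ u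
  simp only [mulbar1, LinearMap.coe_mk, AddHom.coe_mk, Submodule.liftQ_apply, fbar_apply]
  rw [mk_fmul_map_left]

/-- the descended multiplication -/
noncomputable def mulbarK (m n : ℕ) :
    Coinv P m →ₗ[k] Coinv P n →ₗ[k] Coinv P (m + n) :=
  (coinvRel P m).liftQ (mulbar1 P m n) (mulbar1_ker P m n)

lemma mulbarK_mk (m n : ℕ) (x : P.obj (Fin m)) (y : P.obj (Fin n)) :
    mulbarK P m n (Submodule.Quotient.mk x) (Submodule.Quotient.mk y) =
      Submodule.Quotient.mk (P.fmul x y) := rfl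

lemma R_coinvRel (n : ℕ) : coinvRel P n ≤ (coinvRel P n).comap P.R := by
  rw [coinvRel, Submodule.span_le]
  rintro _ ⟨x, α, rfl⟩
  simp only [SetLike.mem_coe, Submodule.mem_comap, map_sub]
  rw [← P.R_natural]
  exact Submodule.subset_span ⟨P.R x, α, rfl⟩

/-- the descended Rota-Baxter operator -/
noncomputable def RbarK (n : ℕ) : Coinv P n →ₗ[k] Coinv P n :=
  Submodule.mapQ (coinvRel P n) (coinvRel P n) P.R (R_coinvRel P n)

lemma RbarK_mk (n : ℕ) (x : P.obj (Fin n)) :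
    RbarK P n (Submodule.Quotient.mk x) = Submodule.Quotient.mk (P.R x) := rfl

lemma cast_mk {a b : ℕ} (h : a = b) (x : P.obj (Fin a)) :
    cast (congrArg (Coinv P) h) (Submodule.Quotient.mk x) =
      (Submodule.Quotient.mk (P.map (finCongr h) x) : Coinv P b) := by
  subst h
  rw [cast_eq]
  exact (mk_map_eq P a 1 x).symm

lemma assoc_equiv (m n p : ℕ) :
    (finSumFinEquiv.sumCongr (Equiv.refl (Fin p))).trans
        (finSumFinEquiv.trans (finCongr (Nat.add_assoc m n p))) =
      (Equiv.sumAssoc (Fin m) (Fin n) (Fin p)).trans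
        (((Equiv.refl (Fin m)).sumCongr finSumFinEquiv).trans finSumFinEquiv) := by
  ext i
  rcases i with (i | i) | i <;>
    simp [Fin.ext_iff, finSumFinEquiv] <;> omega

lemma fmul_assoc {m n p : ℕ} (x : P.obj (Fin m)) (y : P.obj (Fin n)) (z : P.obj (Fin p)) :
    P.map (finCongr (Nat.add_assoc m n p)) (P.fmul (P.fmul x y) z) =
      P.fmul x (P.fmul y z) := by
  unfold RBSpecies.fmul
  have h1 : P.mul (P.map (finSumFinEquiv (m := m) (n := n)) (P.mul x y)) z =
      P.map (finSumFinEquiv.sumCongr (Equiv.refl (Fin p))) (P.mul (P.mul x y) z) := by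
    rw [P.mul_natural, P.map_refl_apply]
  rw [h1, ← P.map_trans_apply, ← P.map_trans_apply, assoc_equiv,
    P.map_trans_apply, P.mul_assoc', P.map_trans_apply, P.mul_natural, P.map_refl_apply]

lemma zero_add_equiv (n : ℕ) :
    (Equiv.emptySum Empty (Fin n)).symm.trans
        (((Equiv.equivEmpty (Fin 0)).symm.sumCongr (Equiv.refl (Fin n))).trans
          finSumFinEquiv) =
      finCongr (Nat.zero_add n).symm := by
  ext i
  simp [Fin.ext_iff, finSumFinEquiv]

lemma add_zero_equiv (n : ℕ) :
    (Equiv.sumEmpty (Fin n) Empty).symm.trans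
        (((Equiv.refl (Fin n)).sumCongr (Equiv.equivEmpty (Fin 0)).symm).trans
          finSumFinEquiv) =
      finCongr (Nat.add_zero n).symm := by
  ext i
  simp [Fin.ext_iff, finSumFinEquiv]

lemma one_fmul {n : ℕ} (x : P.obj (Fin n)) :
    P.fmul P.fone x = P.map (finCongr (Nat.zero_add n).symm) x := by
  unfold RBSpecies.fmul RBSpecies.fone
  have h1 : P.mul (P.map (Equiv.equivEmpty (Fin 0)).symm P.one) x =
      P.map ((Equiv.equivEmpty (Fin 0)).symm.sumCongr (Equiv.refl (Fin n)))
        (P.mul P.one x) := by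
    rw [P.mul_natural, P.map_refl_apply]
  have h2 : P.mul P.one x = P.map (Equiv.emptySum Empty (Fin n)).symm x := by
    have h := congrArg (P.map (Equiv.emptySum Empty (Fin n)).symm) (P.one_mul' x)
    rwa [← P.map_trans_apply, Equiv.self_trans_symm, P.map_refl_apply] at h
  rw [h1, h2, ← P.map_trans_apply, ← P.map_trans_apply, zero_add_equiv]

lemma fmul_one {n : ℕ} (x : P.obj (Fin n)) :
    P.fmul x P.fone = P.map (finCongr (Nat.add_zero n).symm) x := by
  unfold RBSpecies.fmul RBSpecies.fone
  have h1 : P.mul x (P.map (Equiv.equivEmpty (Fin 0)).symm P.one) =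
      P.map ((Equiv.refl (Fin n)).sumCongr (Equiv.equivEmpty (Fin 0)).symm)
        (P.mul x P.one) := by
    rw [P.mul_natural, P.map_refl_apply]
  have h2 : P.mul x P.one = P.map (Equiv.sumEmpty (Fin n) Empty).symm x := by
    have h := congrArg (P.map (Equiv.sumEmpty (Fin n) Empty).symm) (P.mul_one' x)
    rwa [← P.map_trans_apply, Equiv.self_trans_symm, P.map_refl_apply] at h
  rw [h1, h2, ← P.map_trans_apply, ← P.map_trans_apply, add_zero_equiv]

lemma fmul_rb {m n : ℕ} (x : P.obj (Fin m)) (y : P.obj (Fin n)) :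
    P.fmul (P.R x) (P.R y) =
      P.R (P.fmul (P.R x) y + P.fmul x (P.R y) + lam • P.fmul x y) := by
  unfold RBSpecies.fmul
  rw [P.rb, P.R_natural]
  congr 1
  simp [map_add, map_smul]

end Aux

/-- for a Rota-Baxter species `(P, m, 1_P, R)` of weight `λ`, with full Fock
space product `x·y = P[σ_{m,n}](m(x ⊗ y))` and operator `P_F = R`, and with `I` the subspace
spanned by the elements `x − P[α](x)`: one has `P_F(I) ⊆ I`, so the bosonic Fock space
`K(P) = F(P)/I = ⊕ₙ Coinv(P[n̲])` inherits a graded Rota-Baxter algebra structure of weight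
`λ`, with induced operator `P_K` sending the class of `x` to the class of `R(x)`. -/
theorem bosonic_fock_rota_baxter {k : Type} [Field k] (lam : k) (P : RBSpecies k lam) :
    -- `P_F(I) ⊆ I`
    (∀ (n : ℕ) (x : P.obj (Fin n)), x ∈ coinvRel P n → P.R x ∈ coinvRel P n)
    ∧
    -- the graded Rota-Baxter algebra structure descends to the coinvariants
    ∃ (Rbar : ∀ n : ℕ, Coinv P n →ₗ[k] Coinv P n)
      (mulbar : ∀ m n : ℕ, Coinv P m →ₗ[k] Coinv P n →ₗ[k] Coinv P (m + n)),
      -- `P_K` is induced by `R`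
      (∀ (n : ℕ) (x : P.obj (Fin n)),
          Rbar n (Submodule.Quotient.mk x) = Submodule.Quotient.mk (P.R x))
      -- the product is induced by the product of `F(P)`
      ∧ (∀ (m n : ℕ) (x : P.obj (Fin m)) (y : P.obj (Fin n)),
          mulbar m n (Submodule.Quotient.mk x) (Submodule.Quotient.mk y) =
            Submodule.Quotient.mk (P.fmul x y))
      -- graded associativity and unitality
      ∧ (∀ (m n p : ℕ) (u : Coinv P m) (v : Coinv P n) (w : Coinv P p),
          ∀ hc : Coinv P (m + n + p) = Coinv P (m + (n + p)),
            cast hc (mulbar (m + n) p (mulbar m n u v) w) =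
              mulbar m (n + p) u (mulbar n p v w))
      ∧ (∀ (n : ℕ) (u : Coinv P n),
          mulbar 0 n (Submodule.Quotient.mk P.fone) u =
            cast (congrArg (Coinv P) (Nat.zero_add n).symm) u
          ∧ mulbar n 0 u (Submodule.Quotient.mk P.fone) =
            cast (congrArg (Coinv P) (Nat.add_zero n).symm) u)
      -- the Rota-Baxter identity of weight `λ` for `P_K`
      ∧ (∀ (m n : ℕ) (u : Coinv P m) (v : Coinv P n),
          mulbar m n (Rbar m u) (Rbar n v) =
            Rbar (m + n)
              (mulbar m n (Rbar m u) v + mulbar m n u (Rbar n v)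
                + lam • mulbar m n u v)) := by
  refine ⟨fun n x hx => R_coinvRel P n hx, RbarK P, mulbarK P,
    fun n x => rfl, fun m n x y => rfl, ?_, ?_, ?_⟩
  · intro m n p u v w hc
    obtain ⟨x, rfl⟩ := Submodule.Quotient.mk_surjective _ u
    obtain ⟨y, rfl⟩ := Submodule.Quotient.mk_surjective _ v
    obtain ⟨z, rfl⟩ := Submodule.Quotient.mk_surjective _ w
    have hpi : hc = congrArg (Coinv P) (Nat.add_assoc m n p) := Subsingleton.elim _ _
    rw [hpi, mulbarK_mk, mulbarK_mk, mulbarK_mk, mulbarK_mk, cast_mk, ← fmul_assoc]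
  · intro n u
    obtain ⟨x, rfl⟩ := Submodule.Quotient.mk_surjective _ u
    constructor
    · rw [mulbarK_mk, one_fmul, cast_mk]
    · rw [mulbarK_mk, fmul_one, cast_mk]
  · intro m n u v
    obtain ⟨x, rfl⟩ := Submodule.Quotient.mk_surjective _ u
    obtain ⟨y, rfl⟩ := Submodule.Quotient.mk_surjective _ v
    rw [RbarK_mk, RbarK_mk, mulbarK_mk, mulbarK_mk, mulbarK_mk, mulbarK_mk,
      ← Submodule.Quotient.mk_smul, ← Submodule.Quotient.mk_add, ← Submodule.Quotient.mk_add,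
      RbarK_mk, fmul_rb]
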